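/- arXiv:1503.04543 — 4 statements merged into one kernel-verified Lean document; each statement's English description precedes it below -/
import Mathlib

section
/- Let n ≥ 3 be an odd integer. Then the D_n-lattices satisfy M̃₊ ⊕ ℤ ≅ ℤ[D_n/⟨σ⟩] ⊕ ℤ[D_n/⟨τ⟩] as ℤ[D_n]-modules. -/
/-!
Write `n = 2k + 1`, `z` for the generator of `ℤ` and `N = w_0 + ⋯ + w_{n-1}`. The `ℤ`-linear map
`ℤ[D_n/⟨σ⟩] ⊕ ℤ[D_n/⟨τ⟩] → M̃₊ ⊕ ℤ` sending the cosets `⟨σ⟩, τ⟨σ⟩` to `v = w + (k+1)z` and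
`τv = -w + N + (k+1)z`, and `σ^i⟨τ⟩` to `w_i + z`, is `D_n`-equivariant, because `v` is fixed by `σ`
and `w_0 + z` by `τ`. It is surjective since `v + τv - Σ_i (w_i + z) = (2(k+1) - n) z = z`, and a
surjection between free `ℤ`-modules of the same finite rank is bijective.
-/

noncomputable def sigmaA (n : ℕ) : MonoidAlgebra ℤ (DihedralGroup n) :=
  MonoidAlgebra.of ℤ (DihedralGroup n) (DihedralGroup.r 1)

noncomputable def tauA (n : ℕ) : MonoidAlgebra ℤ (DihedralGroup n) :=
  MonoidAlgebra.of ℤ (DihedralGroup n) (DihedralGroup.sr 0)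

theorem Module.Basis.map_smul_of_map_smul_basis {ι R S X Y : Type*} [CommSemiring R]
    [AddCommMonoid X] [Module R X] [DistribSMul S X] [SMulCommClass S R X]
    [AddCommMonoid Y] [Module R Y] [DistribSMul S Y] [SMulCommClass S R Y]
    (bX : Module.Basis ι R X) (f : X →ₗ[R] Y) (a : S)
    (h : ∀ i, f (a • bX i) = a • f (bX i)) (x : X) : f (a • x) = a • f x := by
  have : f ∘ₗ DistribSMul.toLinearMap R X a = DistribSMul.toLinearMap R Y a ∘ₗ f := bX.ext h
  exact LinearMap.congr_fun this x

theorem Module.Basis.prod_inl {ι ι' R X Y : Type*} [Semiring R] [AddCommMonoid X] [Module R X]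
    [AddCommMonoid Y] [Module R Y] (bX : Module.Basis ι R X) (bY : Module.Basis ι' R Y) (i : ι) :
    bX.prod bY (.inl i) = (bX i, 0) := by
  simp [Module.Basis.prod_apply]

theorem Module.Basis.prod_inr {ι ι' R X Y : Type*} [Semiring R] [AddCommMonoid X] [Module R X]
    [AddCommMonoid Y] [Module R Y] (bX : Module.Basis ι R X) (bY : Module.Basis ι' R Y) (i : ι') :
    bX.prod bY (.inr i) = (0, bY i) := by
  simp [Module.Basis.prod_apply]

theorem smul_sum_eq_of_perm {ι S X : Type*} [Fintype ι] [AddCommMonoid X] [DistribSMul S X]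
    (a : S) (v : ι → X) (e : Equiv.Perm ι) (h : ∀ i, a • v i = v (e i)) :
    a • ∑ i, v i = ∑ i, v i := by
  rw [Finset.smul_sum]
  simp only [h]
  exact Equiv.sum_comp e v

section Dihedral

variable {n : ℕ} [NeZero n]

theorem of_r_eq_sigmaA_pow (i : ZMod n) :
    MonoidAlgebra.of ℤ (DihedralGroup n) (DihedralGroup.r i) = sigmaA n ^ i.val := by
  rw [sigmaA, ← map_pow, DihedralGroup.r_one_pow, ZMod.natCast_zmod_val]

theorem of_sr_eq_tauA_mul_sigmaA_pow (i : ZMod n) :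
    MonoidAlgebra.of ℤ (DihedralGroup n) (DihedralGroup.sr i) = tauA n * sigmaA n ^ i.val := by
  rw [tauA, ← of_r_eq_sigmaA_pow, ← map_mul, DihedralGroup.sr_mul_r, zero_add]

variable {X Y : Type*} [AddCommGroup X] [Module (MonoidAlgebra ℤ (DihedralGroup n)) X]
  [AddCommGroup Y] [Module (MonoidAlgebra ℤ (DihedralGroup n)) Y]

theorem LinearMap.map_of_smul_of_sigmaA_tauA (f : X →ₗ[ℤ] Y)
    (hσ : ∀ x, f (sigmaA n • x) = sigmaA n • f x) (hτ : ∀ x, f (tauA n • x) = tauA n • f x)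
    (g : DihedralGroup n) (x : X) :
    f (MonoidAlgebra.of ℤ (DihedralGroup n) g • x) =
      MonoidAlgebra.of ℤ (DihedralGroup n) g • f x := by
  have hpow : ∀ (k : ℕ) (x : X), f (sigmaA n ^ k • x) = sigmaA n ^ k • f x := by
    intro k
    induction k with
    | zero => simp
    | succ m ih => intro x; rw [pow_succ, mul_smul, ih, hσ, ← mul_smul, ← pow_succ]
  cases g with
  | r i => rw [of_r_eq_sigmaA_pow]; exact hpow _ _
  | sr i => rw [of_sr_eq_tauA_mul_sigmaA_pow, mul_smul, mul_smul, hτ, hpow]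

noncomputable def LinearMap.equivariantOfSigmaTau (f : X →ₗ[ℤ] Y)
    (hσ : ∀ x, f (sigmaA n • x) = sigmaA n • f x) (hτ : ∀ x, f (tauA n • x) = tauA n • f x) :
    X →ₗ[MonoidAlgebra ℤ (DihedralGroup n)] Y :=
  MonoidAlgebra.equivariantOfLinearOfComm (M := DihedralGroup n) f fun g x => by
    simpa only [MonoidAlgebra.of_apply] using f.map_of_smul_of_sigmaA_tauA hσ hτ g x

end Dihedral

section Mtilde

variable {n : ℕ} [NeZero n] {M Z P Q : Type*} [AddCommGroup M] [AddCommGroup Z] [AddCommGroup P]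
  [AddCommGroup Q] (b : Module.Basis (ZMod n ⊕ Unit) ℤ M) (bz : Module.Basis Unit ℤ Z)
  (bp : Module.Basis Bool ℤ P) (bq : Module.Basis (ZMod n) ℤ Q)

noncomputable def permToMtilde (k : ℕ) : P × Q →ₗ[ℤ] M × Z :=
  (bp.prod bq).constr ℤ <| Sum.elim
    (fun c => (cond c (-b (.inr ()) + ∑ i, b (.inl i)) (b (.inr ())), (k + 1 : ℤ) • bz ()))
    (fun i => (b (.inl i), bz ()))

theorem permToMtilde_inl (k : ℕ) (c : Bool) : permToMtilde b bz bp bq k (bp c, 0) =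
    (cond c (-b (.inr ()) + ∑ i, b (.inl i)) (b (.inr ())), (k + 1 : ℤ) • bz ()) := by
  rw [← bp.prod_inl bq, permToMtilde, Module.Basis.constr_basis, Sum.elim_inl]

theorem permToMtilde_inr (k : ℕ) (i : ZMod n) :
    permToMtilde b bz bp bq k (0, bq i) = (b (.inl i), bz ()) := by
  rw [← bp.prod_inr bq, permToMtilde, Module.Basis.constr_basis, Sum.elim_inr]

theorem permToMtilde_surjective {k : ℕ} (hk : n = 2 * k + 1) :
    Function.Surjective (permToMtilde b bz bp bq k) := by
  set G := permToMtilde b bz bp bq k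
  have hz : ((0 : M), bz ()) = G (bp false, 0) + G (bp true, 0) - ∑ i, G (0, bq i) := by
    simp only [G, permToMtilde_inl, permToMtilde_inr, cond_true, cond_false]
    ext
    · simp [Prod.fst_sum]
    · simp only [Prod.snd_sub, Prod.snd_add, Prod.snd_sum, Finset.sum_const, Finset.card_univ,
        ZMod.card, ← natCast_zsmul, hk]
      push_cast
      module
  have hz_mem : ((0 : M), bz ()) ∈ LinearMap.range G := by
    rw [hz]
    exact sub_mem (add_mem ⟨_, rfl⟩ ⟨_, rfl⟩) (sum_mem fun i _ => ⟨_, rfl⟩)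
  rw [← LinearMap.range_eq_top, eq_top_iff, ← (b.prod bz).span_eq, Submodule.span_le]
  rintro _ ⟨(i | ⟨⟩) | ⟨⟩, rfl⟩
  · have : (b (.inl i), (0 : Z)) = G (0, bq i) - (0, bz ()) := by simp [G, permToMtilde_inr]
    rw [Module.Basis.prod_inl, SetLike.mem_coe, this]
    exact sub_mem ⟨_, rfl⟩ hz_mem
  · have : (b (.inr ()), (0 : Z)) = G (bp false, 0) - (k + 1 : ℤ) • (0, bz ()) := by
      simp [G, permToMtilde_inl]
    rw [Module.Basis.prod_inl, SetLike.mem_coe, this]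
    exact sub_mem ⟨_, rfl⟩ (Submodule.smul_mem _ _ hz_mem)
  · rwa [Module.Basis.prod_inr]

theorem permToMtilde_bijective {k : ℕ} (hk : n = 2 * k + 1) :
    Function.Bijective (permToMtilde b bz bp bq k) := by
  have := Module.Free.of_basis (bp.prod bq)
  have := Module.Free.of_basis (b.prod bz)
  have := Module.Finite.of_basis (bp.prod bq)
  have := Module.Finite.of_basis (b.prod bz)
  refine OrzechProperty.bijective_of_surjective_of_finrank_le _
    (permToMtilde_surjective b bz bp bq hk) ?_
  rw [Module.finrank_eq_card_basis (bp.prod bq), Module.finrank_eq_card_basis (b.prod bz)]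
  simp only [Fintype.card_sum, Fintype.card_bool, ZMod.card, Fintype.card_unit]
  omega

variable [Module (MonoidAlgebra ℤ (DihedralGroup n)) M]
  [Module (MonoidAlgebra ℤ (DihedralGroup n)) Z]
  [Module (MonoidAlgebra ℤ (DihedralGroup n)) P] [Module (MonoidAlgebra ℤ (DihedralGroup n)) Q]

theorem permToMtilde_map_sigmaA_smul (k : ℕ)
    (hσ1 : ∀ i : ZMod n, sigmaA n • b (Sum.inl i) = b (Sum.inl (i + 1)))
    (hσ2 : sigmaA n • b (Sum.inr ()) = b (Sum.inr ()))
    (hz : ∀ (g : DihedralGroup n) (x : Z), MonoidAlgebra.of ℤ (DihedralGroup n) g • x = x)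
    (hσp : ∀ c : Bool, sigmaA n • bp c = bp c)
    (hσq : ∀ i : ZMod n, sigmaA n • bq i = bq (i + 1)) (x : P × Q) :
    permToMtilde b bz bp bq k (sigmaA n • x) = sigmaA n • permToMtilde b bz bp bq k x := by
  have hσw : sigmaA n • ∑ i, b (.inl i) = ∑ i, b (.inl i) :=
    smul_sum_eq_of_perm _ _ (Equiv.addRight 1) hσ1
  have hσz : ∀ x : Z, sigmaA n • x = x := hz _
  refine (bp.prod bq).map_smul_of_map_smul_basis _ _ (fun j => ?_) x
  rcases j with c | i
  · rw [bp.prod_inl, Prod.smul_mk, hσp, smul_zero, permToMtilde_inl, Prod.smul_mk, smul_comm, hσz]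
    cases c <;> simp [smul_add, hσ2, hσw]
  · rw [bp.prod_inr, Prod.smul_mk, hσq, smul_zero, permToMtilde_inr, permToMtilde_inr, Prod.smul_mk,
      hσ1, hσz]

theorem permToMtilde_map_tauA_smul (k : ℕ)
    (hτ1 : ∀ i : ZMod n, tauA n • b (Sum.inl i) = b (Sum.inl (-i)))
    (hτ2 : tauA n • b (Sum.inr ()) = - b (Sum.inr ()) + ∑ i : ZMod n, b (Sum.inl i))
    (hz : ∀ (g : DihedralGroup n) (x : Z), MonoidAlgebra.of ℤ (DihedralGroup n) g • x = x)
    (hτp : ∀ c : Bool, tauA n • bp c = bp (!c))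
    (hτq : ∀ i : ZMod n, tauA n • bq i = bq (-i)) (x : P × Q) :
    permToMtilde b bz bp bq k (tauA n • x) = tauA n • permToMtilde b bz bp bq k x := by
  have hτw : tauA n • ∑ i, b (.inl i) = ∑ i, b (.inl i) :=
    smul_sum_eq_of_perm _ _ (Equiv.neg _) hτ1
  have hτz : ∀ x : Z, tauA n • x = x := hz _
  refine (bp.prod bq).map_smul_of_map_smul_basis _ _ (fun j => ?_) x
  rcases j with c | i
  · rw [bp.prod_inl, Prod.smul_mk, hτp, smul_zero, permToMtilde_inl, permToMtilde_inl, Prod.smul_mk,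
      smul_comm, hτz]
    cases c <;> simp [smul_add, hτ2, hτw]
  · rw [bp.prod_inr, Prod.smul_mk, hτq, smul_zero, permToMtilde_inr, permToMtilde_inr, Prod.smul_mk,
      hτ1, hτz]

end Mtilde

theorem Mtildeplus_sum_triv_iso_general (n : ℕ) (hodd : Odd n) [NeZero n]
    (M : Type) [AddCommGroup M] [Module ℤ M]
    [Module (MonoidAlgebra ℤ (DihedralGroup n)) M]
    (b : Module.Basis (ZMod n ⊕ Unit) ℤ M)
    (hσ1 : ∀ i : ZMod n, sigmaA n • b (Sum.inl i) = b (Sum.inl (i + 1)))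
    (hσ2 : sigmaA n • b (Sum.inr ()) = b (Sum.inr ()))
    (hτ1 : ∀ i : ZMod n, tauA n • b (Sum.inl i) = b (Sum.inl (-i)))
    (hτ2 : tauA n • b (Sum.inr ()) = - b (Sum.inr ()) + ∑ i : ZMod n, b (Sum.inl i))
    (Z : Type) [AddCommGroup Z] [Module ℤ Z]
    [Module (MonoidAlgebra ℤ (DihedralGroup n)) Z]
    (bz : Module.Basis Unit ℤ Z)
    (hz : ∀ (g : DihedralGroup n) (x : Z), MonoidAlgebra.of ℤ (DihedralGroup n) g • x = x)
    (P : Type) [AddCommGroup P] [Module ℤ P]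
    [Module (MonoidAlgebra ℤ (DihedralGroup n)) P]
    (bp : Module.Basis Bool ℤ P)
    (hσp : ∀ c : Bool, sigmaA n • bp c = bp c)
    (hτp : ∀ c : Bool, tauA n • bp c = bp (!c))
    (Q : Type) [AddCommGroup Q] [Module ℤ Q]
    [Module (MonoidAlgebra ℤ (DihedralGroup n)) Q]
    (bq : Module.Basis (ZMod n) ℤ Q)
    (hσq : ∀ i : ZMod n, sigmaA n • bq i = bq (i + 1))
    (hτq : ∀ i : ZMod n, tauA n • bq i = bq (-i)) :
    Nonempty ((M × Z) ≃ₗ[MonoidAlgebra ℤ (DihedralGroup n)] (P × Q)) := by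
  obtain rfl : ‹Module ℤ M› = AddCommGroup.toIntModule M := Subsingleton.elim _ _
  obtain rfl : ‹Module ℤ Z› = AddCommGroup.toIntModule Z := Subsingleton.elim _ _
  obtain rfl : ‹Module ℤ P› = AddCommGroup.toIntModule P := Subsingleton.elim _ _
  obtain rfl : ‹Module ℤ Q› = AddCommGroup.toIntModule Q := Subsingleton.elim _ _
  obtain ⟨k, hk⟩ := hodd
  let G := (permToMtilde b bz bp bq k).equivariantOfSigmaTau
    (permToMtilde_map_sigmaA_smul b bz bp bq k hσ1 hσ2 hz hσp hσq)
    (permToMtilde_map_tauA_smul b bz bp bq k hτ1 hτ2 hz hτp hτq)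
  exact ⟨(LinearEquiv.ofBijective G (permToMtilde_bijective b bz bp bq hk)).symm⟩

/-- for odd `n ≥ 3`, `M̃₊ ⊕ ℤ ≅ ℤ[D_n/⟨σ⟩] ⊕ ℤ[D_n/⟨τ⟩]` as
`ℤ[D_n]`-modules.  Here `M̃₊` is any `ℤ[D_n]`-module with a `ℤ`-basis
`w_0, …, w_{n-1}, w` (indexed by `ZMod n ⊕ Unit`) on which `σ` acts by
`w_i ↦ w_{i+1}`, `w ↦ w` and `τ` acts by `w_i ↦ w_{-i}`,
`w ↦ -w + (w_0 + ⋯ + w_{n-1})`; `ℤ` is the trivial lattice of rank one;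
`ℤ[D_n/⟨σ⟩]` is the permutation lattice on the two cosets of `⟨σ⟩`
(`σ` fixes both, `τ` swaps them) and `ℤ[D_n/⟨τ⟩]` is the permutation lattice on
the `n` cosets `σ^i⟨τ⟩` (`σ` acts by `i ↦ i + 1`, `τ` by `i ↦ -i`). -/
theorem Mtildeplus_sum_triv_iso (n : ℕ) (hn : 3 ≤ n) (hodd : Odd n) [NeZero n]
    (M : Type) [AddCommGroup M] [Module ℤ M]
    [Module (MonoidAlgebra ℤ (DihedralGroup n)) M]
    [IsScalarTower ℤ (MonoidAlgebra ℤ (DihedralGroup n)) M]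
    (b : Module.Basis (ZMod n ⊕ Unit) ℤ M)
    (hσ1 : ∀ i : ZMod n, sigmaA n • b (Sum.inl i) = b (Sum.inl (i + 1)))
    (hσ2 : sigmaA n • b (Sum.inr ()) = b (Sum.inr ()))
    (hτ1 : ∀ i : ZMod n, tauA n • b (Sum.inl i) = b (Sum.inl (-i)))
    (hτ2 : tauA n • b (Sum.inr ()) = - b (Sum.inr ()) + ∑ i : ZMod n, b (Sum.inl i))
    (Z : Type) [AddCommGroup Z] [Module ℤ Z]
    [Module (MonoidAlgebra ℤ (DihedralGroup n)) Z]
    [IsScalarTower ℤ (MonoidAlgebra ℤ (DihedralGroup n)) Z]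
    (bz : Module.Basis Unit ℤ Z)
    (hz : ∀ (g : DihedralGroup n) (x : Z), MonoidAlgebra.of ℤ (DihedralGroup n) g • x = x)
    (P : Type) [AddCommGroup P] [Module ℤ P]
    [Module (MonoidAlgebra ℤ (DihedralGroup n)) P]
    [IsScalarTower ℤ (MonoidAlgebra ℤ (DihedralGroup n)) P]
    (bp : Module.Basis Bool ℤ P)
    (hσp : ∀ c : Bool, sigmaA n • bp c = bp c)
    (hτp : ∀ c : Bool, tauA n • bp c = bp (!c))
    (Q : Type) [AddCommGroup Q] [Module ℤ Q]
    [Module (MonoidAlgebra ℤ (DihedralGroup n)) Q]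
    [IsScalarTower ℤ (MonoidAlgebra ℤ (DihedralGroup n)) Q]
    (bq : Module.Basis (ZMod n) ℤ Q)
    (hσq : ∀ i : ZMod n, sigmaA n • bq i = bq (i + 1))
    (hτq : ∀ i : ZMod n, tauA n • bq i = bq (-i)) :
    Nonempty ((M × Z) ≃ₗ[MonoidAlgebra ℤ (DihedralGroup n)] (P × Q)) :=
  Mtildeplus_sum_triv_iso_general n hodd M b hσ1 hσ2 hτ1 hτ2 Z bz hz P bp hσp hτp Q bq hσq hτq
end

section
/- Let n ≥ 3 be an odd integer. The determinant of the n × n circulant integer matrix Circ(c_0, …, c_{n−1}) with c_0 = c_1 = ⋯ = c_{(n−3)/2} = 1 (that is, the first (n−1)/2 entries equal to 1) and all remaining entries equal to 0 is (n−1)/2. -/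
/-!
The circulant matrix with first column `c` is diagonalised by the Fourier matrix of an injective
additive character `ψ` of `ZMod n`, so its determinant is `∏ j, ∑ d, c d * ψ (d * j)`. For the
given `c` the factor at `j` is the geometric sum `1 + ψ j + ⋯ + ψ j ^ (m - 1)` with `n = 2m + 1`:
it equals `m` at `j = 0`, and for `j ≠ 0` it is `(ψ (m * j) - 1) / (ψ j - 1)`. Since `m` is a unit
modulo `n` (`m * (-2) = 1`), multiplication by `m` permutes the nonzero residues and these
factors multiply to `1`.
-/

open Matrix Finset

variable {R : Type*} [CommRing R] {n : ℕ} [NeZero n]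

lemma ZMod.val_finEquiv (i : Fin n) : (ZMod.finEquiv n i).val = i := by
  obtain ⟨k, rfl⟩ := Nat.exists_eq_succ_of_ne_zero (NeZero.ne n)
  rfl

lemma ZMod.sum_val {M : Type*} [AddCommMonoid M] (f : ℕ → M) :
    ∑ d : ZMod n, f d.val = ∑ i ∈ range n, f i := by
  obtain ⟨k, rfl⟩ := Nat.exists_eq_succ_of_ne_zero (NeZero.ne n)
  exact Fin.sum_univ_eq_sum_range f _

lemma ZMod.sum_ite_val_lt {M : Type*} [AddCommMonoid M] {m : ℕ} (hm : m ≤ n) (f : ℕ → M) :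
    ∑ d : ZMod n, (if d.val < m then f d.val else 0) = ∑ i ∈ range m, f i := by
  rw [ZMod.sum_val (fun i => if i < m then f i else 0), ← sum_filter]
  congr 1
  ext i
  simp only [mem_filter, mem_range]
  omega

lemma AddChar.map_mul_eq_pow_val (ψ : AddChar (ZMod n) R) (a b : ZMod n) :
    ψ (a * b) = ψ b ^ a.val := by
  rw [← AddChar.map_nsmul_eq_pow, nsmul_eq_mul, ZMod.natCast_zmod_val]

namespace Matrix

def dftMatrix (ψ : AddChar (ZMod n) R) : Matrix (ZMod n) (ZMod n) R :=
  of fun k j => ψ (-(k * j))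

lemma circulant_mul_dftMatrix (ψ : AddChar (ZMod n) R) (c : ZMod n → R) :
    circulant c * dftMatrix ψ = dftMatrix ψ * diagonal fun j => ∑ d, c d * ψ (d * j) := by
  ext i j
  rw [mul_apply, mul_diagonal, dftMatrix, of_apply, mul_sum, ← (Equiv.subLeft i).sum_comp]
  refine sum_congr rfl fun d _ => ?_
  rw [Equiv.subLeft_apply, circulant_apply, of_apply, sub_sub_cancel,
    show -((i - d) * j) = -(i * j) + d * j by ring, AddChar.map_add_eq_mul]
  ring

lemma det_dftMatrix_ne_zero [IsDomain R] {ψ : AddChar (ZMod n) R} (hψ : Function.Injective ψ) :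
    (dftMatrix ψ).det ≠ 0 := by
  set e := (ZMod.finEquiv n).toEquiv
  have hV : (dftMatrix ψ).submatrix e e = vandermonde fun i => ψ (-e i) := by
    ext i j
    rw [submatrix_apply, dftMatrix, of_apply, vandermonde_apply, ← neg_mul, mul_comm,
      AddChar.map_mul_eq_pow_val]
    exact congrArg _ (ZMod.val_finEquiv j)
  rw [← det_submatrix_equiv_self e, hV, det_vandermonde_ne_zero_iff]
  exact hψ.comp (neg_injective.comp e.injective)

theorem det_circulant_eq_prod [IsDomain R] {ψ : AddChar (ZMod n) R}
    (hψ : Function.Injective ψ) (c : ZMod n → R) :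
    (circulant c).det = ∏ j, ∑ d, c d * ψ (d * j) := by
  have h := congrArg det (circulant_mul_dftMatrix ψ c)
  rw [det_mul, det_mul, det_diagonal, mul_comm] at h
  exact mul_left_cancel₀ (det_dftMatrix_ne_zero hψ) h

end Matrix

theorem AddChar.prod_geom_sum_eq_one [IsDomain R] {ψ : AddChar (ZMod n) R}
    (hψ : Function.Injective ψ) {m : ℕ} (hm : IsUnit (m : ZMod n)) :
    ∏ j ∈ univ.erase 0, ∑ i ∈ range m, ψ j ^ i = 1 := by
  obtain ⟨u, hu⟩ := hm
  have hψ₁ : ∀ j ∈ univ.erase (0 : ZMod n), ψ j - 1 ≠ 0 := fun j hj =>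
    sub_ne_zero.mpr (hψ.ne_iff' ψ.map_zero_eq_one |>.mpr (ne_of_mem_erase hj))
  refine mul_right_cancel₀ (prod_ne_zero_iff.mpr hψ₁) ?_
  calc (∏ j ∈ univ.erase 0, ∑ i ∈ range m, ψ j ^ i) * ∏ j ∈ univ.erase 0, (ψ j - 1)
      = ∏ j ∈ univ.erase 0, (ψ (u * j) - 1) := by
        rw [← prod_mul_distrib]
        refine prod_congr rfl fun j _ => ?_
        rw [geom_sum_mul, hu, ← ψ.map_nsmul_eq_pow, nsmul_eq_mul]
    _ = 1 * ∏ j ∈ univ.erase 0, (ψ j - 1) := by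
        rw [one_mul]
        exact prod_equiv (Units.mulLeft u) (by simp) (by simp)

theorem circulant_det_first_half_ones_general (n : ℕ) (hodd : Odd n) [NeZero n] :
    (Matrix.circulant fun k : ZMod n => if k.val < (n - 1) / 2 then (1 : ℤ) else 0).det
      = ((n - 1) / 2 : ℕ) := by
  set m := (n - 1) / 2
  have hn : n = 2 * m + 1 := by obtain ⟨t, rfl⟩ := hodd; omega
  have hm : IsUnit (m : ZMod n) := IsUnit.of_mul_eq_one (-2) <| by
    have h : ((2 * m + 1 : ℕ) : ZMod n) = 0 := by rw [← hn, ZMod.natCast_self]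
    push_cast at h
    linear_combination -h
  set ψ : AddChar (ZMod n) ℂ := ZMod.stdAddChar
  have hψ : Function.Injective ψ := ZMod.injective_stdAddChar
  have hfactor : ∀ j : ZMod n, ∑ d : ZMod n, ((if d.val < m then 1 else 0 : ℤ) : ℂ) * ψ (d * j)
      = ∑ i ∈ range m, ψ j ^ i := fun j => by
    simp only [Int.cast_ite, Int.cast_one, Int.cast_zero, ite_mul, one_mul, zero_mul,
      AddChar.map_mul_eq_pow_val]
    exact ZMod.sum_ite_val_lt (by omega) _
  apply Int.cast_injective (α := ℂ)
  rw [Int.cast_natCast, ← eq_intCast (Int.castRingHom ℂ), RingHom.map_det,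
    RingHom.mapMatrix_apply, map_circulant, det_circulant_eq_prod hψ]
  simp only [Int.coe_castRingHom, hfactor]
  rw [← mul_prod_erase univ _ (mem_univ 0), AddChar.prod_geom_sum_eq_one hψ hm]
  simp

/-- for odd `n ≥ 3`, the determinant of the `n × n` circulant integer
matrix whose first `(n-1)/2` entries (indices `0, …, (n-3)/2`) are `1` and whose
remaining entries are `0` equals `(n-1)/2`.  The `(i, j)` entry of the circulant
matrix is `c (i - j)` with indices in `ZMod n`. -/
theorem circulant_det_first_half_ones (n : ℕ) (hn : 3 ≤ n) (hodd : Odd n) [NeZero n] :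
    (Matrix.circulant fun k : ZMod n => if k.val < (n - 1) / 2 then (1 : ℤ) else 0).det
      = ((n - 1) / 2 : ℕ) :=
  circulant_det_first_half_ones_general n hodd
end

section
/- Let n ≥ 3 be an odd integer. The determinant of the n × n circulant integer matrix Circ(c_0, …, c_{n−1}) with c_0 = ⋯ = c_{(n−3)/2} = −1 (the first (n−1)/2 entries equal to −1), c_{(n−1)/2} = 0, c_{(n+1)/2} = ⋯ = c_{n−2} = 1 (the next (n−3)/2 entries equal to 1), and c_{n−1} = 0, is −1. -/
/-!
Over a domain with a primitive `n`-th root of unity, `Circ(c)` is diagonalised by the characters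
of `ZMod n`, so its determinant is `∏_{zⁿ = 1} f(z)` with `f(z) = ∑ cₜ zᵗ`. For `n = 2m + 1` one
has `f(1) = -1` and, for `zⁿ = 1`, `z (z - 1) f(z) = (z + 1) (1 - z^(m+1))`. Over the roots
`z ≠ 1` the products of `z`, `z - 1`, `z + 1` follow from `∏ (a - z) = 1 + a + ⋯ + aⁿ⁻¹`, and
`z ↦ z^(m+1)` permutes these roots because `2 (m + 1) ≡ 1 [MOD n]`; hence `∏_{z ≠ 1} f(z) = 1`.
-/

open Finset Polynomial Matrix

namespace ZMod

variable {n : ℕ} [NeZero n]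

lemma val_finEquiv_s4 (i : Fin n) : (finEquiv n i).val = i := by
  obtain ⟨k, rfl⟩ := Nat.exists_eq_succ_of_ne_zero (NeZero.ne n)
  rfl

lemma sum_val_eq_sum_range {M : Type*} [AddCommMonoid M] (f : ℕ → M) :
    ∑ j : ZMod n, f j.val = ∑ t ∈ range n, f t := by
  rw [← Fin.sum_univ_eq_sum_range, ← (finEquiv n).toEquiv.sum_comp]
  simp only [RingEquiv.toEquiv_eq_coe, EquivLike.coe_coe, val_finEquiv_s4]

lemma pow_val_add {M : Type*} [Monoid M] {z : M} (hz : z ^ n = 1) (a b : ZMod n) :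
    z ^ (a + b).val = z ^ a.val * z ^ b.val := by
  rw [val_add, ← pow_eq_pow_mod _ hz, pow_add]

end ZMod

section RootsOfUnity

variable {K : Type*} [CommRing K] [IsDomain K] {n : ℕ} {ζ : K}

lemma IsPrimitiveRoot.prod_pow_val_eq_prod_nthRootsFinset [NeZero n] (hζ : IsPrimitiveRoot ζ n)
    {M : Type*} [CommMonoid M] (g : K → M) :
    ∏ k : ZMod n, g (ζ ^ k.val) = ∏ z ∈ nthRootsFinset n (1 : K), g z := by
  refine prod_nbij (fun k => ζ ^ k.val) (fun k _ => ?_) (fun a _ b _ hab => ?_) (fun z hz => ?_)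
    (fun _ _ => rfl)
  · exact (Polynomial.mem_nthRootsFinset (NeZero.pos n) 1).2
      (by rw [← pow_mul, mul_comm, pow_mul, hζ.pow_eq_one, one_pow])
  · exact ZMod.val_injective n (hζ.pow_inj a.val_lt b.val_lt hab)
  · obtain ⟨i, hi, rfl⟩ :=
      hζ.eq_pow_of_pow_eq_one ((Polynomial.mem_nthRootsFinset (NeZero.pos n) 1).1 hz)
    exact ⟨i, mem_coe.2 (mem_univ _), by simp only [ZMod.val_cast_of_lt hi]⟩

lemma IsPrimitiveRoot.prod_nthRootsFinset_erase_one_sub [DecidableEq K] (hζ : IsPrimitiveRoot ζ n)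
    (hn : 0 < n) (a : K) :
    ∏ z ∈ (nthRootsFinset n (1 : K)).erase 1, (a - z) = ∑ i ∈ range n, a ^ i := by
  have hfactor : (X - C 1) * ∏ z ∈ (nthRootsFinset n (1 : K)).erase 1, (X - C z)
      = (X - C 1) * ∑ i ∈ range n, (X : K[X]) ^ i := by
    rw [mul_prod_erase _ (fun z => X - C z) (one_mem_nthRootsFinset hn),
      ← X_pow_sub_one_eq_prod hn hζ, C_1, mul_geom_sum]
  simpa [eval_prod, eval_finsetSum] using
    congrArg (eval a) (mul_left_cancel₀ (X_sub_C_ne_zero 1) hfactor)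

lemma prod_nthRootsFinset_erase_one_comp_pow [DecidableEq K] (hn : 0 < n) {k l : ℕ}
    (hkl : k * l ≡ 1 [MOD n]) {M : Type*} [CommMonoid M] (g : K → M) :
    ∏ z ∈ (nthRootsFinset n (1 : K)).erase 1, g (z ^ k)
      = ∏ z ∈ (nthRootsFinset n (1 : K)).erase 1, g z := by
  have hpow : ∀ {a b : ℕ}, a * b ≡ 1 [MOD n] → ∀ z ∈ (nthRootsFinset n (1 : K)).erase 1,
      z ^ a ∈ (nthRootsFinset n (1 : K)).erase 1 ∧ (z ^ a) ^ b = z := by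
    intro a b hab z hz
    obtain ⟨hz1, hz⟩ := mem_erase.1 hz
    rw [mem_nthRootsFinset hn] at hz
    have hinv : (z ^ a) ^ b = z := by
      rw [← pow_mul, pow_eq_pow_mod _ hz, hab, ← pow_eq_pow_mod _ hz, pow_one]
    refine ⟨mem_erase.2 ⟨fun h => hz1 ?_, (mem_nthRootsFinset hn 1).2 ?_⟩, hinv⟩
    · rw [← hinv, h, one_pow]
    · rw [← pow_mul, mul_comm, pow_mul, hz, one_pow]
  have hlk : l * k ≡ 1 [MOD n] := by rwa [mul_comm]
  exact prod_nbij' (· ^ k) (· ^ l) (fun z hz => (hpow hkl z hz).1) (fun z hz => (hpow hlk z hz).1)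
    (fun z hz => (hpow hkl z hz).2) (fun z hz => (hpow hlk z hz).2) (fun _ _ => rfl)

end RootsOfUnity

namespace Matrix

variable {R : Type*} [CommRing R] [IsDomain R] {n : ℕ} [NeZero n] {ζ : R}

theorem det_circulant_eq_prod_nthRootsFinset (hζ : IsPrimitiveRoot ζ n) (c : ZMod n → R) :
    (circulant c).det = ∏ z ∈ nthRootsFinset n (1 : R), ∑ j, c j * z ^ j.val := by
  set V : Matrix (ZMod n) (ZMod n) R := of fun k i => (ζ ^ k.val) ^ i.val
  have hV : V * circulant c = diagonal (fun k => ∑ j, c j * (ζ ^ k.val) ^ j.val) * V := by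
    ext k i
    have hw : (ζ ^ k.val) ^ n = 1 := by rw [← pow_mul, mul_comm, pow_mul, hζ.pow_eq_one, one_pow]
    rw [diagonal_mul, mul_apply, sum_mul, ← Equiv.sum_comp (Equiv.addRight i)]
    refine sum_congr rfl fun j _ => ?_
    simp only [V, of_apply, circulant_apply, Equiv.coe_addRight, add_sub_cancel_right,
      ZMod.pow_val_add hw]
    ring
  have hVdet : V.det ≠ 0 := by
    rw [← det_submatrix_equiv_self (ZMod.finEquiv n).toEquiv]
    convert det_vandermonde_ne_zero_iff.2 fun a b hab => Fin.ext (hζ.pow_inj a.2 b.2 hab) using 2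
    ext a b
    simp [V, vandermonde_apply, ZMod.val_finEquiv_s4]
  rw [← hζ.prod_pow_val_eq_prod_nthRootsFinset, ← det_diagonal]
  exact mul_left_cancel₀ hVdet (by rw [← det_mul, hV, det_mul, mul_comm])

end Matrix

section MixedCirculant

def mixedCoeff (m t : ℕ) : ℤ :=
  if t < m then -1 else if m + 1 ≤ t ∧ t ≤ 2 * m - 1 then 1 else 0

variable {K : Type*} [CommRing K] {m : ℕ}

def mixedSymbol (m : ℕ) (z : K) : K :=
  ∑ t ∈ Ico (m + 1) (2 * m), z ^ t - ∑ t ∈ range m, z ^ t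

lemma sum_mixedCoeff_mul_pow_val (m : ℕ) (z : K) :
    ∑ j : ZMod (2 * m + 1), (mixedCoeff m j.val : K) * z ^ j.val = mixedSymbol m z := by
  rw [ZMod.sum_val_eq_sum_range fun t => (mixedCoeff m t : K) * z ^ t,
    ← sum_range_add_sum_Ico _ (by omega : m ≤ 2 * m + 1), mixedSymbol, sub_eq_neg_add,
    ← sum_neg_distrib]
  congr 1
  · refine sum_congr rfl fun t ht => ?_
    simp [mixedCoeff, mem_range.1 ht]
  · refine (sum_subset_zero_on_sdiff (Ico_subset_Ico (by omega) (by omega)) ?_ ?_).symm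
    · intro t ht
      obtain ⟨ht, ht'⟩ := mem_sdiff.1 ht
      rw [mem_Ico] at ht ht'
      rw [mixedCoeff, if_neg (by omega), if_neg (by omega), Int.cast_zero, zero_mul]
    · intro t ht
      rw [mem_Ico] at ht
      rw [mixedCoeff, if_neg (by omega), if_pos (by omega), Int.cast_one, one_mul]

lemma mixedSymbol_one (hm : 1 ≤ m) : mixedSymbol m (1 : K) = -1 := by
  simp only [mixedSymbol, one_pow, sum_const, Nat.card_Ico, card_range, nsmul_eq_mul, mul_one]
  rw [Nat.cast_sub (by omega)]
  push_cast
  ring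

-- The factors are written as `a - z` (`a = 0, 1, -1`) to match
-- `IsPrimitiveRoot.prod_nthRootsFinset_erase_one_sub`.
lemma mul_mixedSymbol (hm : 1 ≤ m) {z : K} (hz : z ^ (2 * m + 1) = 1) :
    (0 - z) * (1 - z) * mixedSymbol m z = -((-1 - z) * (1 - z ^ (m + 1))) := by
  have hIco := geom_sum_Ico_mul_neg z (by omega : m + 1 ≤ 2 * m)
  have hrange := geom_sum_mul_neg z m
  rw [mixedSymbol]
  linear_combination (-z) * hIco + z * hrange + hz

lemma prod_mixedSymbol_nthRootsFinset_erase_one [IsDomain K] [DecidableEq K] {ζ : K}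
    (hζ : IsPrimitiveRoot ζ (2 * m + 1)) (hm : 1 ≤ m) :
    ∏ z ∈ (nthRootsFinset (2 * m + 1) (1 : K)).erase 1, mixedSymbol m z = 1 := by
  have hn : 0 < 2 * m + 1 := by omega
  have hcard : Even #((nthRootsFinset (2 * m + 1) (1 : K)).erase 1) := by
    rw [card_erase_of_mem (one_mem_nthRootsFinset hn), hζ.card_nthRootsFinset]
    exact ⟨m, by omega⟩
  have hinv : (m + 1) * 2 ≡ 1 [MOD 2 * m + 1] := by
    rw [Nat.ModEq, show (m + 1) * 2 = 1 + (2 * m + 1) by ring, Nat.add_mod_right]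
  have hprod :
      ∏ z ∈ (nthRootsFinset (2 * m + 1) (1 : K)).erase 1, ((0 - z) * (1 - z) * mixedSymbol m z)
      = ∏ z ∈ (nthRootsFinset (2 * m + 1) (1 : K)).erase 1, -((-1 - z) * (1 - z ^ (m + 1))) :=
    prod_congr rfl fun z hz => mul_mixedSymbol hm
      ((Polynomial.mem_nthRootsFinset hn (1 : K)).1 (mem_of_mem_erase hz))
  rw [prod_mul_distrib, prod_mul_distrib, prod_neg, hcard.neg_one_pow, one_mul, prod_mul_distrib,
    prod_nthRootsFinset_erase_one_comp_pow hn hinv (1 - ·), hζ.prod_nthRootsFinset_erase_one_sub hn,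
    hζ.prod_nthRootsFinset_erase_one_sub hn, hζ.prod_nthRootsFinset_erase_one_sub hn,
    zero_geom_sum, one_geom_sum, neg_one_geom_sum, if_neg hn.ne',
    if_neg m.not_even_two_mul_add_one, one_mul] at hprod
  exact mul_left_cancel₀ hζ.neZero'.out (hprod.trans (mul_one _).symm)

end MixedCirculant

/-- for odd `n ≥ 3`, the determinant of the `n × n` circulant integer
matrix with entries `c_0 = ⋯ = c_{(n-3)/2} = -1`, `c_{(n-1)/2} = 0`,
`c_{(n+1)/2} = ⋯ = c_{n-2} = 1` and `c_{n-1} = 0` equals `-1`.  The `(i, j)` entry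
of the circulant matrix is `c (i - j)` with indices in `ZMod n`. -/
theorem circulant_det_mixed (n : ℕ) (hn : 3 ≤ n) (hodd : Odd n) [NeZero n] :
    (Matrix.circulant fun k : ZMod n =>
        if k.val < (n - 1) / 2 then (-1 : ℤ)
        else if (n + 1) / 2 ≤ k.val ∧ k.val ≤ n - 2 then 1 else 0).det = -1 := by
  obtain ⟨m, rfl⟩ := hodd
  have hm : 1 ≤ m := by omega
  have hζ := Complex.isPrimitiveRoot_exp (2 * m + 1) (by omega)
  rw [show (2 * m + 1 - 1) / 2 = m by omega, show (2 * m + 1 + 1) / 2 = m + 1 by omega,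
    show 2 * m + 1 - 2 = 2 * m - 1 by omega]
  change (circulant fun k : ZMod (2 * m + 1) => mixedCoeff m k.val).det = -1
  apply Int.cast_injective (α := ℂ)
  rw [Int.cast_det, map_circulant, det_circulant_eq_prod_nthRootsFinset hζ,
    ← mul_prod_erase _ _ (one_mem_nthRootsFinset (by omega))]
  simp only [sum_mixedCoeff_mul_pow_val, mixedSymbol_one hm,
    prod_mixedSymbol_nthRootsFinset_erase_one hζ hm]
  norm_num
end

section
/- Let G be a finite group, F a free group of finite rank d, ε : F → G a surjective group homomorphism, and R = ker ε. Then there is a short exact sequence of ℤ[G]-modules 0 → R^{ab} → ℤ[G]^{(d)} → I_G → 0; that is, there exist an injective ℤ[G]-module homomorphism ι : R^{ab} → ℤ[G]^{(d)} and a surjective ℤ[G]-module homomorphism π : ℤ[G]^{(d)} → I_G with ker π = image ι, where ℤ[G]^{(d)} denotes the direct sum of d copies of ℤ[G]. -/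
/-!
Fox calculus. The Fox derivative `∂ : F → ℤ[F]^α` is the crossed homomorphism with
`∂ xᵢ = eᵢ`, and it satisfies `∑ ∂ᵢw (xᵢ - 1) = w - 1`. Pushed forward to `ℤ[G]` it is additive
and `G`-equivariant on `R`, and kills `[R, R]`, so it induces `ι : R^{ab} → ℤ[G]^α`; by the
fundamental formula `ι` lands in the kernel of `p(v) = ∑ vᵢ (ε xᵢ - 1)`, whose image is `I_G`.

Both injectivity and exactness rest on the kernel of `ℤ[F] → ℤ[G]`, which is spanned over `ℤ` by
the `w (r - 1)` with `r ∈ R`. Their Fox derivatives `w ∂r` map into the image of `ι`, which gives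
`ker p ⊆ im ι` because `∂(∑ uᵢ (xᵢ - 1)) = u`. The `ℤ`-linear map `ψ(w) = [w t(εw)⁻¹]`, for a
set-theoretic section `t` of `ε`, sends `r - 1` to `[r]` and kills `ker · I_F`; so if all `∂ᵢr`
map to `0` in `ℤ[G]`, then `[r] = ψ(∑ ∂ᵢr (xᵢ - 1)) = 0`.
-/

open MonoidAlgebra

/-- The augmentation ideal `I_G`: the kernel of the ring homomorphism
`ℤ[G] → ℤ` sending every group element to `1`. -/
noncomputable def augIdeal (G : Type) [Group G] : Ideal (MonoidAlgebra ℤ G) :=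
  RingHom.ker ((MonoidAlgebra.lift ℤ ℤ G) 1).toRingHom

noncomputable section

namespace MonoidAlgebra

section Monoid

variable {R M N : Type*} [Semiring R] [Monoid M] [Monoid N]

@[simp] lemma mapDomainRingHom_of (f : M →* N) (m : M) :
    mapDomainRingHom R f (of R M m) = of R N (f m) := by
  simp [of_apply]

lemma mapDomainRingHom_surjective {f : M →* N} (hf : Function.Surjective f) :
    Function.Surjective (mapDomainRingHom R f) := by
  intro y
  induction y using induction_linear with
  | zero => exact ⟨0, map_zero _⟩
  | add a b ha hb =>
    obtain ⟨x, rfl⟩ := ha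
    obtain ⟨y, rfl⟩ := hb
    exact ⟨x + y, map_add _ x y⟩
  | single n c =>
    obtain ⟨m, rfl⟩ := hf n
    exact ⟨single m c, by simp⟩

end Monoid

variable {R G H : Type*} [Ring R] [Group G] [Group H]

lemma mem_span_of_mapDomainRingHom_eq_zero (f : G →* H) {x : R[G]}
    (hx : mapDomainRingHom R f x = 0) :
    x ∈ Submodule.span R {y | ∃ w, ∃ r ∈ f.ker, of R G w * (of R G r - 1) = y} := by
  set S := Submodule.span R {y | ∃ w, ∃ r ∈ f.ker, of R G w * (of R G r - 1) = y}
  -- For `s = invFun f (f w)`: `s⁻¹ w ∈ ker f` and `w - s = s (s⁻¹ w - 1)`; on the kernel of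
  -- `mapDomainRingHom R f` the correction term `mapDomain (invFun f) _` vanishes.
  have key (y : R[G]) : y - mapDomain (Function.invFun f) (mapDomainRingHom R f y) ∈ S := by
    induction y using induction_linear with
    | zero => simp
    | add a b ha hb =>
      rw [map_add, mapDomain_add, add_sub_add_comm]
      exact add_mem ha hb
    | single w c =>
      set s := Function.invFun f (f w)
      have hs : s⁻¹ * w ∈ f.ker := by
        simp [s, Function.apply_invFun_apply]
      have : single w c - single s c = c • (of R G s * (of R G (s⁻¹ * w) - 1)) := by
        rw [mul_sub, ← map_mul, mul_inv_cancel_left, mul_one, smul_sub, smul_of, smul_of]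
      rw [mapDomainRingHom_apply, mapDomain_single, mapDomain_single, this]
      exact S.smul_mem c (Submodule.subset_span ⟨s, _, hs, rfl⟩)
  simpa [hx] using key x

end MonoidAlgebra

section AugmentationIdeal

variable {G : Type} [Group G]

lemma of_sub_one_mem_augIdeal (g : G) : of ℤ G g - 1 ∈ augIdeal G := by
  simp [augIdeal, RingHom.mem_ker]

lemma augIdeal_le_span_of_sub_one :
    augIdeal G ≤ Ideal.span (Set.range fun g => of ℤ G g - 1) := by
  intro y hy
  have key (y : ℤ[G]) :
      y - lift ℤ ℤ G 1 y • 1 ∈ Ideal.span (Set.range fun g => of ℤ G g - 1) := by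
    induction y using induction_linear with
    | zero => simp
    | add a b ha hb =>
      rw [map_add, add_smul, add_sub_add_comm]
      exact add_mem ha hb
    | single g c =>
      have : single g c - lift ℤ ℤ G 1 (single g c) • 1 = c • (of ℤ G g - 1) := by
        simp [lift_single, smul_sub]
      rw [this]
      exact Submodule.smul_of_tower_mem _ c (Ideal.subset_span ⟨g, rfl⟩)
  simpa [show lift ℤ ℤ G 1 y = 0 from hy] using key y

end AugmentationIdeal

variable (H V : Type*) [Group H] [AddGroup V] [DistribMulAction H V] in
abbrev DistribMulAction.toMulAutMultiplicative : H →* MulAut (Multiplicative V) :=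
  (MulAutMultiplicative V).symm.toMonoidHom.comp (DistribMulAction.toAddAut H V)

namespace FreeGroup

variable {α H V : Type*} [Group H] [AddGroup V] [DistribMulAction H V]

-- A crossed homomorphism `F → V` is the `V`-component of a homomorphism `F → V ⋊ H`.
def crossedHomLift (χ : FreeGroup α →* H) (v : α → V) :
    FreeGroup α →* Multiplicative V ⋊[DistribMulAction.toMulAutMultiplicative H V] H :=
  FreeGroup.lift fun i => ⟨.ofAdd (v i), χ (of i)⟩

def crossedHom (χ : FreeGroup α →* H) (v : α → V) (w : FreeGroup α) : V :=
  (crossedHomLift χ v w).left.toAdd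

variable (χ : FreeGroup α →* H) (v : α → V)

lemma right_crossedHomLift (w : FreeGroup α) : (crossedHomLift χ v w).right = χ w := by
  change (SemidirectProduct.rightHom.comp (crossedHomLift χ v)) w = χ w
  congr 1
  ext i
  simp [crossedHomLift]

@[simp] lemma crossedHom_of (i : α) : crossedHom χ v (of i) = v i := by
  simp [crossedHom, crossedHomLift]

lemma crossedHom_mul (u w : FreeGroup α) :
    crossedHom χ v (u * w) = crossedHom χ v u + χ u • crossedHom χ v w := by
  simp [crossedHom, SemidirectProduct.mul_left, right_crossedHomLift]

@[simp] lemma crossedHom_one : crossedHom χ v 1 = 0 := by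
  simp [crossedHom]

lemma crossedHom_inv (w : FreeGroup α) :
    crossedHom χ v w⁻¹ = -(χ w⁻¹ • crossedHom χ v w) := by
  rw [eq_neg_iff_add_eq_zero, ← crossedHom_mul, inv_mul_cancel, crossedHom_one]

end FreeGroup

section CayleyBoundary

variable {α G : Type*} [Fintype α] [Group G]

def cayleyBoundary (g : α → G) : (α → ℤ[G]) →ₗ[ℤ[G]] ℤ[G] :=
  Fintype.linearCombination ℤ[G] fun i => of ℤ G (g i) - 1

lemma map_cayleyBoundary {H : Type*} [Group H] (f : G →* H) (g : α → G) (u : α → ℤ[G]) :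
    mapDomainRingHom ℤ f (cayleyBoundary g u) =
      cayleyBoundary (f ∘ g) (mapDomainRingHom ℤ f ∘ u) := by
  simp only [cayleyBoundary, Fintype.linearCombination_apply, smul_eq_mul, map_sum, map_mul,
    map_sub, map_one, mapDomainRingHom_of, Function.comp_apply]

lemma cayleyBoundary_mem_augIdeal {G : Type} [Group G] (g : α → G) (u : α → ℤ[G]) :
    cayleyBoundary g u ∈ augIdeal G :=
  Submodule.sum_mem _ fun i _ => Ideal.mul_mem_left _ _ (of_sub_one_mem_augIdeal (g i))

end CayleyBoundary

section FoxDerivative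

variable {α : Type*} [DecidableEq α]

def foxDeriv (w : FreeGroup α) : α → ℤ[FreeGroup α] :=
  FreeGroup.crossedHom (of ℤ (FreeGroup α)).toHomUnits (fun i => Pi.single i 1) w

@[simp] lemma foxDeriv_of (i : α) : foxDeriv (FreeGroup.of i) = Pi.single i 1 :=
  FreeGroup.crossedHom_of _ _ i

@[simp] lemma foxDeriv_one : foxDeriv (1 : FreeGroup α) = 0 := FreeGroup.crossedHom_one _ _

lemma foxDeriv_mul (u w : FreeGroup α) :
    foxDeriv (u * w) = foxDeriv u + of ℤ _ u • foxDeriv w :=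
  FreeGroup.crossedHom_mul _ _ u w

lemma foxDeriv_inv (w : FreeGroup α) :
    foxDeriv w⁻¹ = -(of ℤ _ w⁻¹ • foxDeriv w) :=
  FreeGroup.crossedHom_inv _ _ w

lemma cayleyBoundary_foxDeriv [Fintype α] (w : FreeGroup α) :
    cayleyBoundary FreeGroup.of (foxDeriv w) = of ℤ _ w - 1 := by
  induction w using FreeGroup.induction_on with
  | C1 => rw [foxDeriv_one, map_zero, map_one, sub_self]
  | of i => simp [cayleyBoundary]
  | inv_of i ih =>
    rw [foxDeriv_inv, map_neg, map_smul, ih, smul_eq_mul, mul_sub, ← map_mul, inv_mul_cancel,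
      map_one, mul_one, neg_sub]
  | mul u w hu hw =>
    rw [foxDeriv_mul, map_add, map_smul, hu, hw, smul_eq_mul, mul_sub, ← map_mul, mul_one,
      sub_add_sub_cancel']

def foxDerivLinear : ℤ[FreeGroup α] →ₗ[ℤ] α → ℤ[FreeGroup α] :=
  (MonoidAlgebra.basis (FreeGroup α) ℤ).constr ℤ foxDeriv

@[simp] lemma foxDerivLinear_of (w : FreeGroup α) : foxDerivLinear (of ℤ _ w) = foxDeriv w :=
  (MonoidAlgebra.basis (FreeGroup α) ℤ).constr_basis ℤ _ w

lemma foxDerivLinear_mul_of_sub_one (a : ℤ[FreeGroup α]) (u : FreeGroup α) :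
    foxDerivLinear (a * (of ℤ _ u - 1)) = a • foxDeriv u := by
  induction a using MonoidAlgebra.induction_linear with
  | zero => simp
  | add a b ha hb => rw [add_mul, map_add, ha, hb, add_smul]
  | single w c =>
    have : single w c * (of ℤ _ u - 1) = c • (of ℤ _ (w * u) - of ℤ _ w) := by
      simp [mul_sub, of_apply, single_mul_single, smul_sub, smul_single]
    rw [this, map_zsmul, map_sub, foxDerivLinear_of, foxDerivLinear_of, foxDeriv_mul,
      add_sub_cancel_left, ← smul_assoc, of_apply, smul_single, smul_eq_mul, mul_one]

lemma foxDerivLinear_cayleyBoundary [Fintype α] (u : α → ℤ[FreeGroup α]) :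
    foxDerivLinear (cayleyBoundary FreeGroup.of u) = u := by
  ext i
  simp only [cayleyBoundary, Fintype.linearCombination_apply, smul_eq_mul, map_sum,
    foxDerivLinear_mul_of_sub_one, foxDeriv_of]
  simp [Finset.sum_apply, Pi.single_apply]

end FoxDerivative

section FoxDerivativeOver

variable {α G : Type*} [DecidableEq α] [Group G] (ε : FreeGroup α →* G)

def foxDerivOver (w : FreeGroup α) : α → ℤ[G] :=
  mapDomainRingHom ℤ ε ∘ foxDeriv w

@[simp] lemma foxDerivOver_one : foxDerivOver ε 1 = 0 := by
  ext i
  simp [foxDerivOver]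

lemma foxDerivOver_mul (u w : FreeGroup α) :
    foxDerivOver ε (u * w) = foxDerivOver ε u + of ℤ G (ε u) • foxDerivOver ε w := by
  ext i
  simp only [foxDerivOver, foxDeriv_mul, Function.comp_apply, Pi.add_apply, Pi.smul_apply,
    smul_eq_mul, map_add, map_mul, mapDomainRingHom_of]

lemma foxDerivOver_mul_of_mem_ker {r : FreeGroup α} (hr : r ∈ ε.ker) (w : FreeGroup α) :
    foxDerivOver ε (r * w) = foxDerivOver ε r + foxDerivOver ε w := by
  rw [foxDerivOver_mul, hr, map_one, one_smul]

lemma foxDerivOver_conj {r : FreeGroup α} (hr : r ∈ ε.ker) (f : FreeGroup α) :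
    foxDerivOver ε (f * r * f⁻¹) = of ℤ G (ε f) • foxDerivOver ε r := by
  have hf : foxDerivOver ε f + of ℤ G (ε f) • foxDerivOver ε f⁻¹ = 0 := by
    rw [← foxDerivOver_mul, mul_inv_cancel, foxDerivOver_one]
  rw [mul_assoc, foxDerivOver_mul, foxDerivOver_mul_of_mem_ker ε hr, smul_add,
    add_left_comm, hf, add_zero]

lemma cayleyBoundary_foxDerivOver [Fintype α] (w : FreeGroup α) :
    cayleyBoundary (ε ∘ FreeGroup.of) (foxDerivOver ε w) = of ℤ G (ε w) - 1 := by
  rw [foxDerivOver, ← map_cayleyBoundary, cayleyBoundary_foxDeriv, map_sub, map_one,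
    mapDomainRingHom_of]

lemma range_cayleyBoundary {G : Type} [Group G] [Fintype α] {ε : FreeGroup α →* G}
    (hε : Function.Surjective ε) :
    LinearMap.range (cayleyBoundary (ε ∘ FreeGroup.of)) = augIdeal G := by
  refine le_antisymm ?_ (augIdeal_le_span_of_sub_one.trans (Ideal.span_le.mpr ?_))
  · rintro _ ⟨u, rfl⟩
    exact cayleyBoundary_mem_augIdeal _ u
  · rintro _ ⟨g, rfl⟩
    obtain ⟨w, rfl⟩ := hε g
    exact ⟨foxDerivOver ε w, cayleyBoundary_foxDerivOver ε w⟩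

def foxDerivOverKer : ε.ker →* Multiplicative (α → ℤ[G]) where
  toFun r := .ofAdd (foxDerivOver ε r)
  map_one' := congrArg Multiplicative.ofAdd (foxDerivOver_one ε)
  map_mul' r s := congrArg Multiplicative.ofAdd (foxDerivOver_mul_of_mem_ker ε r.2 s)

lemma foxDerivOverKer_eq_one_of_mem_commutator {r : ε.ker}
    (hr : (r : FreeGroup α) ∈ ⁅ε.ker, ε.ker⁆) : foxDerivOverKer ε r = 1 := by
  rw [← ε.ker.map_subtype_commutator] at hr
  obtain ⟨s, hs, hsr⟩ := hr
  rw [← Subtype.ext hsr]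
  exact Abelianization.commutator_subset_ker _ hs

end FoxDerivativeOver

lemma MonoidHom.mul_inv_invFun_apply_mem_ker {G H : Type*} [Group G] [Group H] (f : G →* H)
    (w : G) : w * (Function.invFun f (f w))⁻¹ ∈ f.ker := by
  simp [Function.apply_invFun_apply]

section RelationModule

variable {α G M : Type*} [Group G] [AddCommGroup M] {ε : FreeGroup α →* G} {π : ε.ker → M}
  (hπadd : ∀ r s : ε.ker, π (r * s) = π r + π s)
  (hπker : ∀ r : ε.ker, π r = 0 ↔ (r : FreeGroup α) ∈ ⁅ε.ker, ε.ker⁆)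
  (hπsurj : Function.Surjective π)

variable (ε π) in
def relationRetraction : ℤ[FreeGroup α] →ₗ[ℤ] M :=
  (MonoidAlgebra.basis _ ℤ).constr ℤ fun w =>
    π ⟨w * (Function.invFun ε (ε w))⁻¹, ε.mul_inv_invFun_apply_mem_ker w⟩

lemma relationRetraction_of (w : FreeGroup α) :
    relationRetraction ε π (of ℤ _ w) =
      π ⟨w * (Function.invFun ε (ε w))⁻¹, ε.mul_inv_invFun_apply_mem_ker w⟩ :=
  (MonoidAlgebra.basis _ ℤ).constr_basis ℤ _ w

section FoxDerivOverOnRelators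

variable [DecidableEq α]

include hπadd hπker

lemma foxDerivOver_eq_of_π_eq {r s : ε.ker} (h : π r = π s) :
    foxDerivOver ε r = foxDerivOver ε s := by
  have h0 : π (r * s⁻¹) = 0 := by
    have := hπadd (r * s⁻¹) s
    rwa [inv_mul_cancel_right, h, right_eq_add] at this
  have := foxDerivOverKer_eq_one_of_mem_commutator ε ((hπker _).1 h0)
  rw [map_mul, map_inv, mul_inv_eq_one] at this
  exact congrArg Multiplicative.toAdd this

lemma foxDerivOver_surjInv_π (r : ε.ker) :
    foxDerivOver ε ((Function.surjInv hπsurj (π r) : ε.ker) : FreeGroup α) = foxDerivOver ε r :=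
  foxDerivOver_eq_of_π_eq hπadd hπker (Function.surjInv_eq hπsurj _)

end FoxDerivOverOnRelators

variable [Module ℤ[G] M]
  (hπconj : ∀ (f : FreeGroup α) (r s : ε.ker),
    (s : FreeGroup α) = f * r * f⁻¹ → π s = of ℤ G (ε f) • π r)

section Retraction

include hπadd hπconj

lemma relationRetraction_of_mul_sub_of (w : FreeGroup α) {r : FreeGroup α} (hr : r ∈ ε.ker) :
    relationRetraction ε π (of ℤ _ (w * r) - of ℤ _ w) = of ℤ G (ε w) • π ⟨r, hr⟩ := by
  have hεwr : ε (w * r) = ε w := by rw [map_mul, hr, mul_one]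
  have hsplit : (⟨w * r * (Function.invFun ε (ε (w * r)))⁻¹,
      ε.mul_inv_invFun_apply_mem_ker _⟩ : ε.ker) = ⟨w * r * w⁻¹, ε.normal_ker.conj_mem r hr w⟩ *
        ⟨w * (Function.invFun ε (ε w))⁻¹, ε.mul_inv_invFun_apply_mem_ker w⟩ := by
    ext
    simp only [hεwr, Subgroup.coe_mul]
    group
  rw [map_sub, relationRetraction_of, relationRetraction_of, hsplit, hπadd,
    hπconj w ⟨r, hr⟩ _ rfl, add_sub_cancel_right]

lemma relationRetraction_of_sub_one (r : ε.ker) :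
    relationRetraction ε π (of ℤ _ (r : FreeGroup α) - 1) = π r := by
  have := relationRetraction_of_mul_sub_of hπadd hπconj 1 r.2
  simpa only [one_mul, map_one, one_smul] using this

lemma relationRetraction_mul_of_sub_one {x : ℤ[FreeGroup α]} (hx : mapDomainRingHom ℤ ε x = 0)
    (u : FreeGroup α) : relationRetraction ε π (x * (of ℤ _ u - 1)) = 0 := by
  have hspan := mem_span_of_mapDomainRingHom_eq_zero ε hx
  clear hx
  induction hspan using Submodule.span_induction with
  | mem y hy =>
    obtain ⟨w, r, hr, rfl⟩ := hy
    have hr' : u⁻¹ * r * u ∈ ε.ker := by simpa using ε.normal_ker.conj_mem r hr u⁻¹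
    have hexpand : of ℤ _ w * (of ℤ _ r - 1) * (of ℤ _ u - 1) =
        (of ℤ _ (w * u * (u⁻¹ * r * u)) - of ℤ _ (w * u)) - (of ℤ _ (w * r) - of ℤ _ w) := by
      simp only [mul_sub, sub_mul, ← map_mul, mul_one]
      rw [show w * u * (u⁻¹ * r * u) = w * r * u by group]
    rw [hexpand, map_sub, relationRetraction_of_mul_sub_of hπadd hπconj _ hr',
      relationRetraction_of_mul_sub_of hπadd hπconj _ hr, hπconj u⁻¹ ⟨r, hr⟩ ⟨_, hr'⟩ (by simp),
      smul_smul, ← map_mul, ← map_mul, mul_inv_cancel_right, sub_self]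
  | zero => rw [zero_mul, map_zero]
  | add a b _ _ ha hb => rw [add_mul, map_add, ha, hb, add_zero]
  | smul c a _ ha => rw [smul_mul_assoc, map_zsmul, ha, smul_zero]

variable [DecidableEq α] [Fintype α]

lemma π_eq_zero_of_foxDerivOver_eq_zero {r : ε.ker} (h : foxDerivOver ε r = 0) : π r = 0 := by
  rw [← relationRetraction_of_sub_one hπadd hπconj, ← cayleyBoundary_foxDeriv, cayleyBoundary,
    Fintype.linearCombination_apply, map_sum]
  exact Finset.sum_eq_zero fun i _ =>
    relationRetraction_mul_of_sub_one hπadd hπconj (congrFun h i) _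

end Retraction

variable [DecidableEq α] (hε : Function.Surjective ε)

def relationEmbedding : M →ₗ[ℤ[G]] α → ℤ[G] :=
  equivariantOfLinearOfComm
    (AddMonoidHom.mk' (fun m => foxDerivOver ε ((Function.surjInv hπsurj m : ε.ker) : FreeGroup α))
      (by
        intro m n
        obtain ⟨r, rfl⟩ := hπsurj m
        obtain ⟨s, rfl⟩ := hπsurj n
        rw [← hπadd, foxDerivOver_surjInv_π hπadd hπker, foxDerivOver_surjInv_π hπadd hπker,
          foxDerivOver_surjInv_π hπadd hπker]
        exact foxDerivOver_mul_of_mem_ker ε r.2 s)).toIntLinearMap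
    (by
      intro g m
      obtain ⟨r, rfl⟩ := hπsurj m
      obtain ⟨f, rfl⟩ := hε g
      simp only [AddMonoidHom.coe_toIntLinearMap, AddMonoidHom.mk'_apply]
      rw [← of_apply, ← hπconj f r ⟨_, ε.normal_ker.conj_mem r r.2 f⟩ rfl,
        foxDerivOver_surjInv_π hπadd hπker, foxDerivOver_surjInv_π hπadd hπker]
      exact foxDerivOver_conj ε r.2 f)

lemma relationEmbedding_π (r : ε.ker) :
    relationEmbedding hπadd hπker hπsurj hπconj hε (π r) = foxDerivOver ε r :=
  foxDerivOver_surjInv_π hπadd hπker hπsurj r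

lemma comp_foxDerivLinear_mem_range_relationEmbedding {x : ℤ[FreeGroup α]}
    (hx : mapDomainRingHom ℤ ε x = 0) :
    mapDomainRingHom ℤ ε ∘ foxDerivLinear x ∈
      LinearMap.range (relationEmbedding hπadd hπker hπsurj hπconj hε) := by
  let Φ := LinearMap.compLeft (mapDomainRingHom ℤ ε).toAddMonoidHom.toIntLinearMap α ∘ₗ
    foxDerivLinear
  suffices Submodule.span ℤ {y | ∃ w, ∃ r ∈ ε.ker, of ℤ _ w * (of ℤ _ r - 1) = y} ≤
      ((LinearMap.range (relationEmbedding hπadd hπker hπsurj hπconj hε)).restrictScalars ℤ).comap Φ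
    from this (mem_span_of_mapDomainRingHom_eq_zero ε hx)
  rw [Submodule.span_le]
  rintro _ ⟨w, r, hr, rfl⟩
  refine ⟨of ℤ G (ε w) • π ⟨r, hr⟩, ?_⟩
  rw [map_smul, relationEmbedding_π]
  change _ = mapDomainRingHom ℤ ε ∘ foxDerivLinear (of ℤ _ w * (of ℤ _ r - 1))
  rw [foxDerivLinear_mul_of_sub_one]
  ext i
  simp only [foxDerivOver, Function.comp_apply, Pi.smul_apply, smul_eq_mul, map_mul,
    mapDomainRingHom_of]

variable [Fintype α]

lemma relationEmbedding_injective :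
    Function.Injective (relationEmbedding hπadd hπker hπsurj hπconj hε) := by
  refine (injective_iff_map_eq_zero _).2 fun m hm => ?_
  obtain ⟨r, rfl⟩ := hπsurj m
  rw [relationEmbedding_π] at hm
  exact π_eq_zero_of_foxDerivOver_eq_zero hπadd hπconj hm

lemma ker_cayleyBoundary_eq_range_relationEmbedding :
    LinearMap.ker (cayleyBoundary (ε ∘ FreeGroup.of)) =
      LinearMap.range (relationEmbedding hπadd hπker hπsurj hπconj hε) := by
  refine le_antisymm (fun v hv => ?_) ?_
  · obtain ⟨u, rfl⟩ : ∃ u, mapDomainRingHom ℤ ε ∘ u = v :=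
      ⟨_, funext fun i => Function.surjInv_eq (mapDomainRingHom_surjective hε) (v i)⟩
    rw [← foxDerivLinear_cayleyBoundary u]
    refine comp_foxDerivLinear_mem_range_relationEmbedding hπadd hπker hπsurj hπconj hε ?_
    rw [map_cayleyBoundary]
    exact hv
  · rintro _ ⟨m, rfl⟩
    obtain ⟨r, rfl⟩ := hπsurj m
    rw [LinearMap.mem_ker, relationEmbedding_π, cayleyBoundary_foxDerivOver,
      MonoidHom.mem_ker.mp r.2, map_one, sub_self]

end RelationModule

end

theorem relationModule_ses_general (G : Type) [Group G] (d : ℕ)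
    (ε : FreeGroup (Fin d) →* G) (hε : Function.Surjective ε)
    (M : Type) [AddCommGroup M] [Module (MonoidAlgebra ℤ G) M]
    (π : ε.ker → M)
    (hπadd : ∀ r s : ε.ker, π (r * s) = π r + π s)
    (hπsurj : Function.Surjective π)
    (hπker : ∀ r : ε.ker, π r = 0 ↔
      (r : FreeGroup (Fin d)) ∈ (⁅ε.ker, ε.ker⁆ : Subgroup (FreeGroup (Fin d))))
    (hπconj : ∀ (f : FreeGroup (Fin d)) (r s : ε.ker),
      (s : FreeGroup (Fin d)) = f * r * f⁻¹ →
      π s = MonoidAlgebra.of ℤ G (ε f) • π r) :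
    ∃ (ι : M →ₗ[MonoidAlgebra ℤ G] (Fin d → MonoidAlgebra ℤ G))
      (p : (Fin d → MonoidAlgebra ℤ G) →ₗ[MonoidAlgebra ℤ G] ↥(augIdeal G)),
      Function.Injective ι ∧ Function.Surjective p ∧
      LinearMap.ker p = LinearMap.range ι := by
  refine ⟨relationEmbedding hπadd hπker hπsurj hπconj hε,
    (cayleyBoundary (ε ∘ FreeGroup.of)).codRestrict (augIdeal G) (cayleyBoundary_mem_augIdeal _),
    relationEmbedding_injective hπadd hπker hπsurj hπconj hε, ?_, ?_⟩
  · rintro ⟨y, hy⟩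
    rw [← range_cayleyBoundary hε] at hy
    obtain ⟨v, rfl⟩ := hy
    exact ⟨v, rfl⟩
  · rw [LinearMap.ker_codRestrict,
      ker_cayleyBoundary_eq_range_relationEmbedding hπadd hπker hπsurj hπconj hε]

/-- for a free presentation `1 → R → F → G → 1` of a finite group `G`
(`F` free of rank `d`, `ε` surjective, `R = ker ε`) there is a short exact sequence
of `ℤ[G]`-modules `0 → R^{ab} → ℤ[G]^{(d)} → I_G → 0`.

The relation module `R^{ab}` is characterised as a `ℤ[G]`-module `M` together with
a surjective map `π : R → M` satisfying `π(rs) = π(r) + π(s)`, with kernel exactly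
the commutator subgroup `[R, R]`, and compatible with conjugation:
`π(f r f⁻¹) = ε(f) • π(r)`. -/
theorem relationModule_ses (G : Type) [Group G] [Finite G] (d : ℕ)
    (ε : FreeGroup (Fin d) →* G) (hε : Function.Surjective ε)
    (M : Type) [AddCommGroup M] [Module (MonoidAlgebra ℤ G) M]
    (π : ε.ker → M)
    (hπadd : ∀ r s : ε.ker, π (r * s) = π r + π s)
    (hπsurj : Function.Surjective π)
    (hπker : ∀ r : ε.ker, π r = 0 ↔
      (r : FreeGroup (Fin d)) ∈ (⁅ε.ker, ε.ker⁆ : Subgroup (FreeGroup (Fin d))))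
    (hπconj : ∀ (f : FreeGroup (Fin d)) (r s : ε.ker),
      (s : FreeGroup (Fin d)) = f * r * f⁻¹ →
      π s = MonoidAlgebra.of ℤ G (ε f) • π r) :
    ∃ (ι : M →ₗ[MonoidAlgebra ℤ G] (Fin d → MonoidAlgebra ℤ G))
      (p : (Fin d → MonoidAlgebra ℤ G) →ₗ[MonoidAlgebra ℤ G] ↥(augIdeal G)),
      Function.Injective ι ∧ Function.Surjective p ∧
      LinearMap.ker p = LinearMap.range ι :=
  relationModule_ses_general G d ε hε M π hπadd hπsurj hπker hπconj
end
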